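/- Let T = M_w E M_u be a nonzero bounded operator on L^p(F). If T is power bounded, then |E(uw)| ≤ 1 almost everywhere (equivalently ‖E(uw)‖_∞ ≤ 1). -/

import Mathlib

/-!
Write `h = E(uw)`. Since `T ≠ 0`, the product `u f` is integrable for every `f ∈ Lᵖ`, so the
pull-out property of `E` gives `T^(n+1) f = hⁿ · T f`. As `‖hⁿ T f‖_p ≥ (1 + η)ⁿ ‖1_{|h| ≥ 1 + η} T f‖_p`,
power boundedness forces every `T f` to vanish on `S = {|h| > 1}`. Pulling out once more, `E(u f)`
vanishes on `S` for every `f`; testing against indicators gives `u = 0` a.e. on `S`, hence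
`h = E(uw) = 0` on `S`, which is only possible if `S` is null.
-/

open MeasureTheory Filter
open scoped ENNReal Topology

theorem ENNReal.eq_zero_of_forall_pow_mul_le {c a C : ℝ≥0∞} (hc : 1 < c) (hC : C ≠ ∞)
    (h : ∀ n : ℕ, c ^ n * a ≤ C) : a = 0 := by
  by_contra ha
  have hlim : Tendsto (fun n : ℕ => c ^ n * a) atTop (𝓝 ∞) := by
    simpa [ENNReal.top_mul ha] using ENNReal.Tendsto.mul_const (b := a)
      (ENNReal.tendsto_pow_atTop_nhds_top_iff.2 hc) (Or.inl ENNReal.top_ne_zero)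
  obtain ⟨n, hn⟩ := (hlim.eventually (lt_mem_nhds hC.lt_top)).exists
  exact (h n).not_gt hn

section Lp

variable {X : Type*} [MeasurableSpace X] {μ : Measure X} {p : ℝ≥0∞}

theorem ae_eq_zero_of_le_abs_of_eLpNorm_pow_mul_le (hp : p ≠ 0) {h g : X → ℝ}
    (hh : Measurable h) (hg : AEStronglyMeasurable g μ) {C : ℝ≥0∞} (hC : C ≠ ∞)
    (hbound : ∀ n : ℕ, eLpNorm (fun x => h x ^ n * g x) p μ ≤ C) {c : ℝ} (hc : 1 < c) :
    ∀ᵐ x ∂μ, c ≤ |h x| → g x = 0 := by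
  have hS : MeasurableSet {x | c ≤ |h x|} := measurableSet_le measurable_const hh.abs
  set g' := {x | c ≤ |h x|}.indicator g
  have hle : ∀ n : ℕ, ‖c‖ₑ ^ n * eLpNorm g' p μ ≤ C := fun n => calc
    ‖c‖ₑ ^ n * eLpNorm g' p μ = eLpNorm (c ^ n • g') p μ := by
      rw [eLpNorm_const_smul, enorm_pow]
    _ ≤ eLpNorm (fun x => h x ^ n * g x) p μ := by
      refine eLpNorm_mono fun x => ?_
      by_cases hx : c ≤ |h x|
      · simp only [g', Pi.smul_apply, Set.indicator_of_mem (show x ∈ {x | c ≤ |h x|} from hx),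
          smul_eq_mul, Real.norm_eq_abs, abs_mul, abs_pow]
        rw [abs_of_pos (one_pos.trans hc)]
        gcongr
      · simp only [g', Pi.smul_apply, Set.indicator_of_notMem (show x ∉ {x | c ≤ |h x|} from hx),
          smul_eq_mul, mul_zero, norm_zero, norm_mul, norm_pow]
        positivity
    _ ≤ C := hbound n
  have hc' : 1 < ‖c‖ₑ := by
    rw [Real.enorm_eq_ofReal_abs, abs_of_pos (one_pos.trans hc)]
    exact ENNReal.one_lt_ofReal.2 hc
  have hg' : g' =ᵐ[μ] 0 :=
    (eLpNorm_eq_zero_iff (hg.indicator hS) hp).1 (ENNReal.eq_zero_of_forall_pow_mul_le hc' hC hle)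
  filter_upwards [hg'] with x hx hcx
  simpa [g', Set.indicator_of_mem (show x ∈ {x | c ≤ |h x|} from hcx)] using hx

theorem ae_abs_le_one_of_eLpNorm_pow_mul_le (hp : p ≠ 0) {h g : X → ℝ}
    (hh : Measurable h) (hg : AEStronglyMeasurable g μ) {C : ℝ≥0∞} (hC : C ≠ ∞)
    (hbound : ∀ n : ℕ, eLpNorm (fun x => h x ^ n * g x) p μ ≤ C) :
    ∀ᵐ x ∂μ, g x ≠ 0 → |h x| ≤ 1 := by
  have hk : ∀ k : ℕ, ∀ᵐ x ∂μ, 1 + 1 / ((k : ℝ) + 1) ≤ |h x| → g x = 0 := fun k =>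
    ae_eq_zero_of_le_abs_of_eLpNorm_pow_mul_le hp hh hg hC hbound (lt_add_of_pos_right 1 (by positivity))
  filter_upwards [ae_all_iff.2 hk] with x hx hgx
  by_contra! hlt
  obtain ⟨k, hk⟩ := exists_nat_one_div_lt (sub_pos.2 hlt)
  exact hgx (hx k (by linarith))

theorem ae_eq_zero_on_of_setIntegral_mul_eq_zero [SigmaFinite μ] {u : X → ℝ} {S : Set X}
    (hS : MeasurableSet S) (hint : ∀ f : Lp ℝ p μ, Integrable (fun x => u x * f x) μ)
    (h0 : ∀ f : Lp ℝ p μ, ∫ x in S, u x * f x ∂μ = 0) :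
    ∀ᵐ x ∂μ, x ∈ S → u x = 0 := by
  have hind : ∀ s (hs : MeasurableSet s) (hμs : μ s < ∞),
      (fun x => u x * indicatorConstLp p hs hμs.ne (1 : ℝ) x) =ᵐ[μ] s.indicator u := by
    intro s hs hμs
    filter_upwards [indicatorConstLp_coeFn (p := p) (hs := hs) (hμs := hμs.ne) (c := (1 : ℝ))]
      with x hx
    by_cases hxs : x ∈ s <;> simp [hx, hxs]
  have hSu : S.indicator u =ᵐ[μ] 0 := by
    refine ae_eq_zero_of_forall_setIntegral_eq_of_sigmaFinite (fun s hs hμs => ?_) fun s hs hμs => ?_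
    · rw [← integrable_indicator_iff hs, Set.indicator_indicator, Set.inter_comm,
        ← Set.indicator_indicator]
      exact ((hint _).congr (hind s hs hμs)).indicator hS
    · rw [← integral_indicator hs, Set.indicator_indicator, Set.inter_comm,
        ← Set.indicator_indicator, integral_indicator hS, ← h0 (indicatorConstLp p hs hμs.ne 1)]
      exact setIntegral_congr_ae hS ((hind s hs hμs).mono fun x hx _ => hx.symm)
  filter_upwards [hSu] with x hx hxS
  simpa [Set.indicator_of_mem hxS] using hx

end Lp

section CondExp

variable {X : Type*} {m m0 : MeasurableSpace X} {μ : Measure X}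

theorem condExp_eq_zero_on_of_eq_zero_on {F : X → ℝ} (hF : Integrable F μ) {S : Set X}
    (hS : MeasurableSet[m] S) (h0 : ∀ᵐ x ∂μ, x ∈ S → F x = 0) :
    ∀ᵐ x ∂μ, x ∈ S → (μ[F|m]) x = 0 := by
  have hSF : S.indicator F =ᵐ[μ] 0 := by
    filter_upwards [h0] with x hx
    by_cases hxS : x ∈ S <;> simp [hxS, hx]
  have : S.indicator (μ[F|m]) =ᵐ[μ] 0 :=
    (condExp_indicator hF hS).symm.trans ((condExp_congr_ae hSF).trans (by rw [condExp_zero]))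
  filter_upwards [this] with x hx hxS
  simpa [Set.indicator_of_mem hxS] using hx

end CondExp

def IsWeightedCondExpOperator {X : Type*} {m0 : MeasurableSpace X} (m : MeasurableSpace X)
    (μ : Measure[m0] X) (u w : X → ℝ) {p : ℝ≥0∞} [Fact (1 ≤ p)] (T : Lp ℝ p μ →L[ℝ] Lp ℝ p μ) :
    Prop :=
  ∀ f : Lp ℝ p μ, (T f : X → ℝ) =ᵐ[μ] fun x => w x * (μ[fun y => u y * (f : X → ℝ) y | m]) x

namespace IsWeightedCondExpOperator

variable {X : Type*} {m m0 : MeasurableSpace X} {μ : Measure[m0] X} {u w : X → ℝ} {p : ℝ≥0∞}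
  [Fact (1 ≤ p)] {T : Lp ℝ p μ →L[ℝ] Lp ℝ p μ}

theorem apply_eq_zero_of_not_integrable (hT : IsWeightedCondExpOperator m μ u w T)
    {f : Lp ℝ p μ} (hf : ¬Integrable (fun x => u x * f x) μ) : T f = 0 := by
  rw [Lp.eq_zero_iff_ae_eq_zero]
  filter_upwards [hT f] with x hx
  simp [hx, condExp_of_not_integrable hf]

theorem integrable_mul (hT : IsWeightedCondExpOperator m μ u w T) (hT0 : T ≠ 0)
    (f : Lp ℝ p μ) : Integrable (fun x => u x * f x) μ := by
  obtain ⟨f₀, hf₀⟩ : ∃ f₀, T f₀ ≠ 0 := by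
    by_contra! h
    exact hT0 (ContinuousLinearMap.ext h)
  have hf₀int : Integrable (fun x => u x * f₀ x) μ :=
    not_not.1 (mt hT.apply_eq_zero_of_not_integrable hf₀)
  by_contra hf
  -- otherwise `u * (f₀ + f)` is not integrable either, so `T f₀ = T (f₀ + f) - T f = 0`
  have hsum : ¬Integrable (fun x => u x * (f₀ + f : Lp ℝ p μ) x) μ := fun hs =>
    hf <| (hs.sub hf₀int).congr <| by
      filter_upwards [Lp.coeFn_add f₀ f] with x hx
      simp only [hx, Pi.add_apply, Pi.sub_apply]
      ring
  apply hf₀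
  calc T f₀ = T (f₀ + f) - T f := by rw [map_add, add_sub_cancel_right]
    _ = 0 := by
      rw [hT.apply_eq_zero_of_not_integrable hsum, hT.apply_eq_zero_of_not_integrable hf, sub_zero]

theorem apply_apply_ae_eq (hT : IsWeightedCondExpOperator m μ u w T) (hT0 : T ≠ 0)
    (huw : Integrable (fun x => u x * w x) μ) (g : Lp ℝ p μ) :
    (T (T g) : X → ℝ) =ᵐ[μ] fun x => (μ[fun y => u y * w y | m]) x * T g x := by
  set φ := μ[fun y => u y * g y | m]
  have hprod : (fun x => u x * T g x) =ᵐ[μ] φ * fun x => u x * w x := by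
    filter_upwards [hT g] with x hx
    simp only [hx, Pi.mul_apply]
    ring
  have hpull : μ[φ * fun x => u x * w x | m] =ᵐ[μ] φ * μ[fun x => u x * w x | m] :=
    condExp_mul_of_stronglyMeasurable_left stronglyMeasurable_condExp
      ((hT.integrable_mul hT0 (T g)).congr hprod) huw
  filter_upwards [hT (T g), condExp_congr_ae hprod, hpull, hT g] with x h1 h2 h3 h4
  rw [h1, h2, h3, h4, Pi.mul_apply]
  ring

theorem pow_succ_apply_ae_eq (hT : IsWeightedCondExpOperator m μ u w T) (hT0 : T ≠ 0)
    (huw : Integrable (fun x => u x * w x) μ) (n : ℕ) (g : Lp ℝ p μ) :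
    ((T ^ (n + 1)) g : X → ℝ) =ᵐ[μ] fun x => (μ[fun y => u y * w y | m]) x ^ n * T g x := by
  induction n generalizing g with
  | zero => simp
  | succ n ih =>
    rw [pow_succ]
    filter_upwards [ih (T g), hT.apply_apply_ae_eq hT0 huw g] with x h1 h2
    change ((T ^ (n + 1)) (T g) : X → ℝ) x = _
    rw [h1, h2]
    ring

theorem ae_abs_condExp_le_one_of_apply_ne_zero (hm : m ≤ m0)
    (hT : IsWeightedCondExpOperator m μ u w T) (hT0 : T ≠ 0)
    (huw : Integrable (fun x => u x * w x) μ) {C : ℝ} (hC : ∀ n : ℕ, ‖T ^ n‖ ≤ C)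
    (g : Lp ℝ p μ) : ∀ᵐ x ∂μ, T g x ≠ 0 → |(μ[fun y => u y * w y | m]) x| ≤ 1 := by
  refine ae_abs_le_one_of_eLpNorm_pow_mul_le (zero_lt_one.trans_le (Fact.out : 1 ≤ p)).ne'
    (stronglyMeasurable_condExp.mono hm).measurable (Lp.aestronglyMeasurable _)
    (ENNReal.ofReal_ne_top (r := C * ‖g‖)) fun n => ?_
  calc eLpNorm (fun x => (μ[fun y => u y * w y | m]) x ^ n * T g x) p μ
      = ‖(T ^ (n + 1)) g‖ₑ := by
        rw [Lp.enorm_def, eLpNorm_congr_ae (hT.pow_succ_apply_ae_eq hT0 huw n g)]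
    _ ≤ ENNReal.ofReal (C * ‖g‖) := by
      rw [← ofReal_norm]
      exact ENNReal.ofReal_le_ofReal ((T ^ (n + 1)).le_of_opNorm_le (hC _) g)

theorem condExp_mul_eq_zero_on_of_apply_eq_zero_on (hT : IsWeightedCondExpOperator m μ u w T)
    (huw : Integrable (fun x => u x * w x) μ) {S : Set X} (hS : MeasurableSet[m] S)
    (hh : ∀ x ∈ S, (μ[fun y => u y * w y | m]) x ≠ 0) {f : Lp ℝ p μ}
    (hf : ∀ᵐ x ∂μ, x ∈ S → T f x = 0) :
    ∀ᵐ x ∂μ, x ∈ S → (μ[fun y => u y * f y | m]) x = 0 := by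
  set φ := S.indicator (μ[fun y => u y * f y | m])
  have h0 : φ * (fun x => u x * w x) =ᵐ[μ] 0 := by
    filter_upwards [hT f, hf] with x hTx hfx
    by_cases hxS : x ∈ S
    · have hwφ : w x * φ x = 0 := by
        rw [show φ x = _ from Set.indicator_of_mem hxS _, ← hTx, hfx hxS]
      simp only [Pi.mul_apply, Pi.zero_apply]
      linear_combination u x * hwφ
    · simp [φ, hxS]
  have hφh : φ * μ[fun x => u x * w x | m] =ᵐ[μ] 0 :=
    (condExp_mul_of_stronglyMeasurable_left (stronglyMeasurable_condExp.indicator hS)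
      ((integrable_zero _ _ _).congr h0.symm) huw).symm.trans
      ((condExp_congr_ae h0).trans (by rw [condExp_zero]))
  filter_upwards [hφh] with x hx hxS
  simpa [φ, hxS, hh x hxS] using hx

end IsWeightedCondExpOperator

theorem wce_power_bounded_necessary_general {X : Type*} {m m0 : MeasurableSpace X} (hm : m ≤ m0)
    (μ : Measure X) [SigmaFinite μ] [SigmaFinite (μ.trim hm)]
    (u w : X → ℝ) (p : ℝ≥0∞) [Fact (1 ≤ p)]
    (T : Lp ℝ p μ →L[ℝ] Lp ℝ p μ)
    (hT : ∀ f : Lp ℝ p μ, (T f : X → ℝ) =ᵐ[μ]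
      fun x => w x * (μ[fun y => u y * (f : X → ℝ) y | m]) x)
    (hT0 : T ≠ 0)
    (hpb : ∃ C : ℝ, ∀ n : ℕ, ‖T ^ n‖ ≤ C) :
    ∀ᵐ x ∂μ, |(μ[fun y => u y * w y | m]) x| ≤ 1 := by
  have hT' : IsWeightedCondExpOperator m μ u w T := hT
  by_cases huw : Integrable (fun y => u y * w y) μ
  swap
  · simp [condExp_of_not_integrable huw]
  obtain ⟨C, hC⟩ := hpb
  set S := {x | 1 < |(μ[fun y => u y * w y | m]) x|}
  have hS : MeasurableSet[m] S :=
    (measurable_abs.comp stronglyMeasurable_condExp.measurable) measurableSet_Ioi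
  have hTS (f : Lp ℝ p μ) : ∀ᵐ x ∂μ, x ∈ S → T f x = 0 :=
    (hT'.ae_abs_condExp_le_one_of_apply_ne_zero hm hT0 huw hC f).mono fun x hx hxS => by
      by_contra hne
      exact (hx hne).not_gt hxS
  have hSu : ∀ᵐ x ∂μ, x ∈ S → u x = 0 := by
    refine ae_eq_zero_on_of_setIntegral_mul_eq_zero (hm _ hS) (hT'.integrable_mul hT0) fun f => ?_
    rw [← setIntegral_condExp hm (hT'.integrable_mul hT0 f) hS]
    exact setIntegral_eq_zero_of_ae_eq_zero <| hT'.condExp_mul_eq_zero_on_of_apply_eq_zero_on huw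
      hS (fun x hx => abs_pos.1 (one_pos.trans hx)) (hTS f)
  have hSh := condExp_eq_zero_on_of_eq_zero_on huw hS (hSu.mono fun x hx hxS => by simp [hx hxS])
  filter_upwards [hSh] with x hx
  by_contra! hxS
  norm_num [hx hxS] at hxS

theorem wce_power_bounded_necessary {X : Type*} {m m0 : MeasurableSpace X} (hm : m ≤ m0)
    (μ : Measure X) [μ.IsComplete] [SigmaFinite μ] [SigmaFinite (μ.trim hm)]
    (u w : X → ℝ) (p : ℝ≥0∞) [Fact (1 ≤ p)]
    (T : Lp ℝ p μ →L[ℝ] Lp ℝ p μ)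
    (hT : ∀ f : Lp ℝ p μ, (T f : X → ℝ) =ᵐ[μ]
      fun x => w x * (μ[fun y => u y * (f : X → ℝ) y | m]) x)
    (hT0 : T ≠ 0)
    (hpb : ∃ C : ℝ, ∀ n : ℕ, ‖T ^ n‖ ≤ C) :
    ∀ᵐ x ∂μ, |(μ[fun y => u y * w y | m]) x| ≤ 1 :=
  wce_power_bounded_necessary_general hm μ u w p T hT hT0 hpb
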